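/- arXiv:2506.00810 — 12 statements merged into one kernel-verified Lean document; each statement's English description precedes it below -/
import Mathlib

section
/- For a metric space (X,d), a point p ∈ X, and x, y ∈ X \ {p}, the scale-invariant Cassinian distance satisfies τ_p(x,y) ≤ u_p(x,y), where u_p is Ibragimov's metric on X \ {p}. -/
open Real

lemma Real.sqrt_mul_le_max {a b : ℝ} (ha : 0 ≤ a) (hb : 0 ≤ b) : √(a * b) ≤ max a b := by
  rw [Real.sqrt_le_iff]
  refine ⟨ha.trans (le_max_left a b), ?_⟩
  rw [sq]
  exact mul_le_mul (le_max_left a b) (le_max_right a b) hb (ha.trans (le_max_left a b))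

lemma one_add_two_mul_div_le_sq {s t M : ℝ} (hs : 0 < s) (ht : 0 ≤ t) (hsM : s ≤ M) :
    1 + 2 * t / s ≤ ((t + M) / s) ^ 2 := by
  calc 1 + 2 * t / s ≤ 1 + 2 * t / s + (t / s) ^ 2 := le_add_of_nonneg_right (sq_nonneg _)
    _ = ((t + s) / s) ^ 2 := by field_simp; ring
    _ ≤ ((t + M) / s) ^ 2 := by gcongr

lemma log_one_add_two_mul_div_le {s t M : ℝ} (hs : 0 < s) (ht : 0 ≤ t) (hsM : s ≤ M) :
    log (1 + 2 * t / s) ≤ 2 * log ((t + M) / s) := by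
  calc log (1 + 2 * t / s) ≤ log (((t + M) / s) ^ 2) :=
        log_le_log (by positivity) (one_add_two_mul_div_le_sq hs ht hsM)
    _ = 2 * log ((t + M) / s) := by rw [Real.log_pow]; norm_num

/-- τ_p ≤ u_p in a once-punctured metric space. -/
theorem tau_le_u {X : Type*} [MetricSpace X] (p x y : X) (hx : x ≠ p) (hy : y ≠ p) :
    Real.log (1 + 2 * dist x y / Real.sqrt (dist x p * dist y p)) ≤
      2 * Real.log ((dist x y + max (dist x p) (dist y p)) /
        Real.sqrt (dist x p * dist y p)) := by
  have hxp : 0 < dist x p := dist_pos.mpr hx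
  have hyp : 0 < dist y p := dist_pos.mpr hy
  exact log_one_add_two_mul_div_le (by positivity) dist_nonneg
    (Real.sqrt_mul_le_max hxp.le hyp.le)
end

section
/- For a metric space (X,d), a point p ∈ X, and x, y ∈ X \ {p}, one has u_p(x,y) ≤ 2 τ_p(x,y). -/
/-!
Write `a = d(x,p)`, `b = d(y,p)`. The geometric mean `√(ab)` is at least `min a b`, and
`max a b - min a b = |a - b| ≤ d(x,y)` by the triangle inequality, so
`max a b ≤ √(ab) + d(x,y)`. Adding `d(x,y)` and dividing by `√(ab)` compares the arguments of
the two logarithms, and `log` is monotone.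
-/

open Real

lemma min_le_sqrt_mul {a b : ℝ} (ha : 0 ≤ a) (hb : 0 ≤ b) : min a b ≤ √(a * b) :=
  le_sqrt_of_sq_le <| by
    rw [sq]
    exact mul_le_mul (min_le_left a b) (min_le_right a b) (le_min ha hb) ha

lemma max_le_sqrt_mul_add_abs_sub {a b : ℝ} (ha : 0 ≤ a) (hb : 0 ≤ b) :
    max a b ≤ √(a * b) + |a - b| := by
  linarith [max_sub_min_eq_abs' a b, min_le_sqrt_mul ha hb]

lemma max_dist_le_sqrt_mul_dist_add_dist {X : Type*} [PseudoMetricSpace X] (p x y : X) :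
    max (dist x p) (dist y p) ≤ √(dist x p * dist y p) + dist x y :=
  (max_le_sqrt_mul_add_abs_sub dist_nonneg dist_nonneg).trans
    (add_le_add_right (abs_dist_sub_le x y p) _)

/-- u_p ≤ 2 τ_p in a once-punctured metric space. -/
theorem u_le_two_tau {X : Type*} [MetricSpace X] (p x y : X) (hx : x ≠ p) (hy : y ≠ p) :
    2 * Real.log ((dist x y + max (dist x p) (dist y p)) /
        Real.sqrt (dist x p * dist y p)) ≤
      2 * Real.log (1 + 2 * dist x y / Real.sqrt (dist x p * dist y p)) := by
  have hxp : 0 < dist x p := dist_pos.2 hx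
  have hs : 0 < √(dist x p * dist y p) := sqrt_pos.2 (mul_pos hxp (dist_pos.2 hy))
  rw [one_add_div hs.ne']
  gcongr 2 * log (?_ / _)
  linarith [max_dist_le_sqrt_mul_dist_add_dist p x y]
end

section
/- In the punctured Euclidean space ℝⁿ \ {0}, with x = e₁ and y = t·e₁ for 0 < t < 1, the ratio τ_0(x,y)/u_0(x,y) tends to 1/2 as t → 0⁺; hence the constant 2 in the inequality u_p ≤ 2 τ_p is sharp. -/
/-!
For a unit vector `x` and `0 < t < 1`, the arguments of the logarithms in `τ₀(x, t x)` and
`u₀(x, t x) / 2` are `1 + 2 (1 - t) / √t` and `(2 - t) / √t`. Both are asymptotic to `2 / √t → ∞`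
as `t → 0⁺`, so their logarithms are asymptotically equivalent and the ratio tends to `1 / 2`.
-/

open Filter Real Asymptotics Topology

theorem Real.tendsto_log_div_log_of_isEquivalent {α : Type*} {l : Filter α} {f g : α → ℝ}
    (hfg : f ~[l] g) (hg : Tendsto g l atTop) :
    Tendsto (fun x => log (f x) / log (g x)) l (𝓝 1) :=
  (isEquivalent_iff_tendsto_one ((tendsto_log_atTop.comp hg).eventually_ne_atTop 0)).mp
    (hfg.log hg)

theorem Real.tendsto_sqrt_nhdsGT_zero : Tendsto (fun t : ℝ => √t) (𝓝[>] 0) (𝓝[>] 0) :=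
  tendsto_nhdsWithin_iff.mpr
    ⟨(continuous_sqrt.tendsto' 0 0 sqrt_zero).mono_left nhdsWithin_le_nhds,
      eventually_mem_nhdsWithin.mono fun _ ht => sqrt_pos.mpr ht⟩

theorem tendsto_two_sub_div_sqrt_atTop : Tendsto (fun t : ℝ => (2 - t) / √t) (𝓝[>] 0) atTop := by
  have h2 : Tendsto (fun t : ℝ => 2 - t) (𝓝[>] 0) (𝓝 2) :=
    ((continuous_const.sub continuous_id).tendsto' 0 2 (by norm_num)).mono_left
      nhdsWithin_le_nhds
  exact h2.pos_mul_atTop two_pos (tendsto_inv_nhdsGT_zero.comp tendsto_sqrt_nhdsGT_zero)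

theorem one_add_two_mul_div_sqrt_isEquivalent :
    (fun t : ℝ => 1 + 2 * (1 - t) / √t) ~[𝓝[>] 0] fun t => (2 - t) / √t := by
  have hratio : Tendsto (fun t : ℝ => (√t + 2 * (1 - t)) / (2 - t)) (𝓝[>] 0) (𝓝 1) := by
    have hcont : ContinuousAt (fun t : ℝ => (√t + 2 * (1 - t)) / (2 - t)) 0 := by
      fun_prop (disch := norm_num)
    simpa using hcont.tendsto.mono_left nhdsWithin_le_nhds
  refine isEquivalent_of_tendsto_one (hratio.congr' ?_)
  filter_upwards [self_mem_nhdsWithin] with t (ht : 0 < t)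
  have : √t ≠ 0 := (sqrt_pos.mpr ht).ne'
  simp only [Pi.div_apply]
  field_simp

section Punctured

variable {E : Type*} [NormedAddCommGroup E] [NormedSpace ℝ E]

/-- `τ₀` on `E \ {0}`, with `dist x 0` in the role of `|x|`; `uZero` is `u₀` likewise. -/
noncomputable def tauZero (x y : E) : ℝ :=
  log (1 + 2 * dist x y / √(dist x 0 * dist y 0))

noncomputable def uZero (x y : E) : ℝ :=
  2 * log ((dist x y + max (dist x 0) (dist y 0)) / √(dist x 0 * dist y 0))

variable {x : E} {t : ℝ}

theorem dist_self_smul_of_norm_eq_one (hx : ‖x‖ = 1) (ht : t ≤ 1) : dist x (t • x) = 1 - t := by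
  rw [dist_eq_norm, show x - t • x = (1 - t) • x by module, norm_smul, hx, mul_one,
    norm_of_nonneg (sub_nonneg.mpr ht)]

theorem dist_smul_zero_of_norm_eq_one (hx : ‖x‖ = 1) (ht : 0 ≤ t) : dist (t • x) 0 = t := by
  rw [dist_zero_right, norm_smul, hx, mul_one, norm_of_nonneg ht]

theorem tauZero_self_smul (hx : ‖x‖ = 1) (ht₀ : 0 ≤ t) (ht₁ : t ≤ 1) :
    tauZero x (t • x) = log (1 + 2 * (1 - t) / √t) := by
  rw [tauZero, dist_self_smul_of_norm_eq_one hx ht₁, dist_smul_zero_of_norm_eq_one hx ht₀,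
    dist_zero_right, hx, one_mul]

theorem uZero_self_smul (hx : ‖x‖ = 1) (ht₀ : 0 ≤ t) (ht₁ : t ≤ 1) :
    uZero x (t • x) = 2 * log ((2 - t) / √t) := by
  rw [uZero, dist_self_smul_of_norm_eq_one hx ht₁, dist_smul_zero_of_norm_eq_one hx ht₀,
    dist_zero_right, hx, one_mul, max_eq_left ht₁,
    show 1 - t + 1 = 2 - t by ring]

end Punctured

/-- Sharpness of u_p ≤ 2 τ_p: in ℝⁿ \ {0} with x = e₁, y = t e₁,
the ratio τ₀/u₀ tends to 1/2 as t → 0⁺. -/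
theorem tau_u_ratio_sharp (n : ℕ) (hn : 0 < n)
    (x : EuclideanSpace ℝ (Fin n)) (hx : x = EuclideanSpace.single ⟨0, hn⟩ 1) :
    Filter.Tendsto (fun t : ℝ =>
      Real.log (1 + 2 * dist x (t • x) / Real.sqrt (dist x 0 * dist (t • x) 0)) /
        (2 * Real.log ((dist x (t • x) + max (dist x 0) (dist (t • x) 0)) /
          Real.sqrt (dist x 0 * dist (t • x) 0))))
      (nhdsWithin 0 (Set.Ioo 0 1)) (nhds (1 / 2)) := by
  change Tendsto (fun t : ℝ => tauZero x (t • x) / uZero x (t • x)) _ _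
  have hx₁ : ‖x‖ = 1 := by simp [hx]
  have hlog := (tendsto_log_div_log_of_isEquivalent one_add_two_mul_div_sqrt_isEquivalent
    tendsto_two_sub_div_sqrt_atTop).div_const 2
  refine (hlog.mono_left (nhdsWithin_mono _ Set.Ioo_subset_Ioi_self)).congr' ?_
  filter_upwards [self_mem_nhdsWithin] with t ⟨ht₀, ht₁⟩
  rw [tauZero_self_smul hx₁ ht₀.le ht₁.le, uZero_self_smul hx₁ ht₀.le ht₁.le, div_div,
    mul_comm (log _) 2]
end

section
/- Let (X,d) be a metric space, p ∈ X, and x, y ∈ X \ {p}. Then (1/2)·j̃_p(x,y) ≤ τ_p(x,y) ≤ 2·j̃_p(x,y), where j̃_p is the distance ratio metric on X \ {p}. -/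
/-!
With `a = d(x,p)`, `b = d(y,p)`, `t = d(x,y)`, `m = min a b` and `s = √(ab)`, both inequalities
are of the form `log u ≤ 2 log v` with `u ≤ v²`. For the upper bound, `m ≤ s` gives
`1 + 2t/s ≤ 1 + 2t/m ≤ (1 + t/m)²`. For the lower bound, the triangle inequality gives
`max a b ≤ m + t ≤ s + t`, and `s² = m · max a b`, so `t/m = t · max a b / s² ≤ t/s + (t/s)²`.
-/

open Real

namespace Real

lemma log_le_two_mul_log_of_le_sq {u v : ℝ} (hu : 0 < u) (huv : u ≤ v ^ 2) :
    log u ≤ 2 * log v := by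
  simpa [log_pow] using log_le_log hu huv

section GeometricMean

variable {a b t : ℝ}

lemma min_le_sqrt_mul (ha : 0 ≤ a) (hb : 0 ≤ b) : min a b ≤ √(a * b) := by
  rw [← min_mul_max a b]
  exact le_sqrt_of_sq_le <| by
    rw [sq]
    exact mul_le_mul_of_nonneg_left min_le_max (le_min ha hb)

lemma one_add_two_mul_div_sqrt_mul_le_sq (ha : 0 < a) (hb : 0 < b) (ht : 0 ≤ t) :
    1 + 2 * t / √(a * b) ≤ (1 + t / min a b) ^ 2 := by
  calc 1 + 2 * t / √(a * b) ≤ 1 + 2 * t / min a b := by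
        gcongr
        exact min_le_sqrt_mul ha.le hb.le
    _ = (1 + t / min a b) ^ 2 - (t / min a b) ^ 2 := by ring
    _ ≤ (1 + t / min a b) ^ 2 := sub_le_self _ (sq_nonneg _)

lemma one_add_div_min_le_sq (ha : 0 < a) (hb : 0 < b) (ht : 0 ≤ t) (hab : |a - b| ≤ t) :
    1 + t / min a b ≤ (1 + 2 * t / √(a * b)) ^ 2 := by
  set s := √(a * b)
  have hs : 0 < s := sqrt_pos.2 (mul_pos ha hb)
  have hs_sq : s ^ 2 = min a b * max a b := by
    rw [sq_sqrt (mul_pos ha hb).le, min_mul_max]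
  have hmin : min a b ≤ s := min_le_sqrt_mul ha.le hb.le
  have hmax : max a b ≤ s + t := by linarith [max_sub_min_eq_abs' a b]
  calc 1 + t / min a b = 1 + t * max a b / s ^ 2 := by
        rw [hs_sq]; field_simp
    _ ≤ 1 + t * (s + t) / s ^ 2 := by gcongr
    _ = 1 + t / s + (t / s) ^ 2 := by field_simp; ring
    _ ≤ (1 + 2 * t / s) ^ 2 := by
        have : 0 ≤ t / s := div_nonneg ht hs.le
        rw [mul_div_assoc]
        nlinarith

end GeometricMean

end Real

/-- (1/2) j̃_p ≤ τ_p ≤ 2 j̃_p in once-punctured metric spaces. -/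
theorem tau_jtilde_comparison {X : Type*} [MetricSpace X] (p x y : X)
    (hx : x ≠ p) (hy : y ≠ p) :
    (1 / 2) * Real.log (1 + dist x y / min (dist x p) (dist y p)) ≤
        Real.log (1 + 2 * dist x y / Real.sqrt (dist x p * dist y p)) ∧
      Real.log (1 + 2 * dist x y / Real.sqrt (dist x p * dist y p)) ≤
        2 * Real.log (1 + dist x y / min (dist x p) (dist y p)) := by
  have ha : 0 < dist x p := dist_pos.2 hx
  have hb : 0 < dist y p := dist_pos.2 hy
  have ht : 0 ≤ dist x y := dist_nonneg
  have hj : 0 < 1 + dist x y / min (dist x p) (dist y p) := by positivity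
  have hτ : 0 < 1 + 2 * dist x y / √(dist x p * dist y p) := by positivity
  constructor
  · have := log_le_two_mul_log_of_le_sq hj
      (one_add_div_min_le_sq ha hb ht (abs_dist_sub_le x y p))
    linarith
  · exact log_le_two_mul_log_of_le_sq hτ (one_add_two_mul_div_sqrt_mul_le_sq ha hb ht)
end

section
/- Let (X,d) be a metric space and p₁,…,p_k ∈ X with D = X \ {p₁,…,p_k}. Then for all x, y ∈ D, τ̂_D(x,y) ≤ 2·j̃_D(x,y). -/
/-!
Let `m` be the smaller of `d(x)` and `d(y)`. Every `√(d(x,pᵢ) d(y,pᵢ))` is at least `m`, so each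
summand of `τ̂_D` is at most `log (1 + 2t)` with `t = d(x,y)/m`, and `1 + 2t ≤ (1 + t)²`.
The average of the summands is then at most `2 log (1 + t) = 2 j̃_D(x,y)`.
-/

open Finset

lemma Real.log_one_add_two_mul_div_le {t m s : ℝ} (ht : 0 ≤ t) (hm : 0 < m) (hms : m ≤ s) :
    Real.log (1 + 2 * t / s) ≤ 2 * Real.log (1 + t / m) := by
  have hdiv : 2 * t / s ≤ 2 * (t / m) := by
    rw [← mul_div_assoc]
    exact div_le_div_of_nonneg_left (by positivity) hm hms
  have hs : 0 < s := hm.trans_le hms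
  calc Real.log (1 + 2 * t / s)
      ≤ Real.log ((1 + t / m) ^ 2) := by
        apply Real.log_le_log (by positivity)
        nlinarith [sq_nonneg (t / m)]
    _ = 2 * Real.log (1 + t / m) := by rw [Real.log_pow]; norm_num

lemma Real.le_sqrt_mul_of_le_of_le {m a b : ℝ} (hm : 0 ≤ m) (ha : m ≤ a) (hb : m ≤ b) :
    m ≤ Real.sqrt (a * b) :=
  (Real.le_sqrt hm (by nlinarith)).mpr (by nlinarith)

/-- `hc` covers the empty index type, where the junk value `1 / 0 = 0` makes the left side `0`. -/
lemma one_div_mul_sum_le_of_le {ι : Type*} [Fintype ι] {f : ι → ℝ} {c : ℝ} (hc : 0 ≤ c)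
    (hf : ∀ i, f i ≤ c) : 1 / (Fintype.card ι : ℝ) * ∑ i, f i ≤ c := by
  rw [one_div_mul_eq_div]
  refine div_le_of_le_mul₀ (Nat.cast_nonneg _) hc ?_
  simpa [mul_comm] using sum_le_card_nsmul univ f c fun i _ => hf i

section

variable {X ι : Type*} [MetricSpace X] [Finite ι]

lemma iInf_dist_le (x : X) (p : ι → X) (i : ι) : ⨅ j, dist x (p j) ≤ dist x (p i) :=
  ciInf_le (Finite.bddBelow_range _) i

lemma iInf_dist_pos [Nonempty ι] {x : X} {p : ι → X} (hx : ∀ i, x ≠ p i) :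
    0 < ⨅ i, dist x (p i) := by
  obtain ⟨i, hi⟩ := Finite.exists_min fun i => dist x (p i)
  exact (dist_pos.mpr (hx i)).trans_le (le_ciInf hi)

end

theorem avg_tau_le_two_jtilde_general {X : Type*} [MetricSpace X] (k : ℕ)
    (p : Fin k → X) (x y : X) (hx : ∀ i, x ≠ p i) (hy : ∀ i, y ≠ p i) :
    (1 / (k : ℝ)) * ∑ i : Fin k,
        Real.log (1 + 2 * dist x y / Real.sqrt (dist x (p i) * dist y (p i))) ≤
      2 * Real.log (1 + dist x y / min (⨅ i, dist x (p i)) (⨅ i, dist y (p i))) := by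
  set m := min (⨅ i, dist x (p i)) (⨅ i, dist y (p i))
  have hm_nonneg : 0 ≤ m := le_min (Real.iInf_nonneg fun _ => dist_nonneg)
    (Real.iInf_nonneg fun _ => dist_nonneg)
  have hterm (i : Fin k) : Real.log (1 + 2 * dist x y / Real.sqrt (dist x (p i) * dist y (p i)))
      ≤ 2 * Real.log (1 + dist x y / m) := by
    have : Nonempty (Fin k) := ⟨i⟩
    have hm_pos : 0 < m := lt_min (iInf_dist_pos hx) (iInf_dist_pos hy)
    exact Real.log_one_add_two_mul_div_le dist_nonneg hm_pos <| Real.le_sqrt_mul_of_le_of_le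
      hm_nonneg ((min_le_left _ _).trans (iInf_dist_le x p i))
      ((min_le_right _ _).trans (iInf_dist_le y p i))
  simpa only [Fintype.card_fin] using one_div_mul_sum_le_of_le
    (mul_nonneg zero_le_two (Real.log_nonneg (le_add_of_nonneg_right (by positivity)))) hterm

/-- τ̂_D ≤ 2 j̃_D in arbitrary metric spaces with finitely many punctures. -/
theorem avg_tau_le_two_jtilde {X : Type*} [MetricSpace X] (k : ℕ) (hk : 0 < k)
    (p : Fin k → X) (x y : X) (hx : ∀ i, x ≠ p i) (hy : ∀ i, y ≠ p i) :
    (1 / (k : ℝ)) * ∑ i : Fin k,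
        Real.log (1 + 2 * dist x y / Real.sqrt (dist x (p i) * dist y (p i))) ≤
      2 * Real.log (1 + dist x y / min (⨅ i, dist x (p i)) (⨅ i, dist y (p i))) :=
  avg_tau_le_two_jtilde_general k p x y hx hy
end

section
/- Let (X,d) be a metric space, p ∈ X, and x, y ∈ X \ {p}. Then j_p(x,y) ≤ τ_p(x,y) ≤ 2·j_p(x,y), where j_p is the Gehring–Osgood distance ratio metric on X \ {p}. -/
/-!
Write `a = d(x,p)`, `b = d(y,p)`, `t = d(x,y)`. Then `exp (2 j_p) = (a + t)(b + t)/(ab)` and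
`exp τ_p = 1 + 2t/√(ab)`. The bound `τ_p ≤ 2 j_p` is AM-GM, `a + b ≥ 2√(ab)`; the bound
`j_p ≤ τ_p` follows from `a + b - 2√(ab) = (√a - √b)² ≤ |a - b| ≤ t`, the last step being the
triangle inequality.
-/

namespace Real

variable {a b t : ℝ}

theorem add_sub_two_sqrt_mul_le_abs_sub (ha : 0 ≤ a) (hb : 0 ≤ b) :
    a + b - 2 * √(a * b) ≤ |a - b| := by
  have hu := sq_sqrt ha
  have hv := sq_sqrt hb
  rw [sqrt_mul ha, ← hu, ← hv, sqrt_sq (sqrt_nonneg a), sqrt_sq (sqrt_nonneg b)]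
  -- `(√a - √b)² ≤ |√a - √b| (√a + √b)` since `|√a - √b| ≤ √a + √b`
  rw [show √a ^ 2 - √b ^ 2 = (√a - √b) * (√a + √b) by ring, abs_mul,
    abs_of_nonneg (add_nonneg (sqrt_nonneg a) (sqrt_nonneg b))]
  nlinarith [abs_nonneg (√a - √b), le_abs_self (√a - √b), neg_abs_le (√a - √b),
    sqrt_nonneg a, sqrt_nonneg b]

theorem one_add_div_mul_one_add_div (ha : 0 < a) (hb : 0 < b) :
    (1 + t / a) * (1 + t / b) = (a + t) * (b + t) / (a * b) := by
  field_simp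

theorem one_add_two_mul_div_sqrt_mul_le (ha : 0 < a) (hb : 0 < b) (ht : 0 ≤ t) :
    1 + 2 * t / √(a * b) ≤ (1 + t / a) * (1 + t / b) := by
  have hs : 0 < √(a * b) := sqrt_pos.mpr (mul_pos ha hb)
  have hs2 : √(a * b) ^ 2 = a * b := sq_sqrt (mul_pos ha hb).le
  have hamgm : 2 * √(a * b) ≤ a + b := by nlinarith [sq_nonneg (a - b), sq_nonneg (a + b)]
  rw [one_add_div_mul_one_add_div ha hb,
    show 1 + 2 * t / √(a * b) = √(a * b) * (√(a * b) + 2 * t) / (a * b) by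
      field_simp; rw [hs2]]
  apply div_le_div_of_nonneg_right _ (mul_pos ha hb).le
  nlinarith [mul_le_mul_of_nonneg_left hamgm ht]

theorem one_add_div_mul_one_add_div_le_sq (ha : 0 < a) (hb : 0 < b) (hab : |a - b| ≤ t) :
    (1 + t / a) * (1 + t / b) ≤ (1 + 2 * t / √(a * b)) ^ 2 := by
  have ht : 0 ≤ t := (abs_nonneg _).trans hab
  have hs : 0 < √(a * b) := sqrt_pos.mpr (mul_pos ha hb)
  have hs2 : √(a * b) ^ 2 = a * b := sq_sqrt (mul_pos ha hb).le
  have hsum : a + b ≤ t + 2 * √(a * b) := by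
    linarith [add_sub_two_sqrt_mul_le_abs_sub ha.le hb.le]
  rw [one_add_div_mul_one_add_div ha hb,
    show (1 + 2 * t / √(a * b)) ^ 2 = (√(a * b) + 2 * t) ^ 2 / (a * b) by
      field_simp; rw [hs2]]
  apply div_le_div_of_nonneg_right _ (mul_pos ha hb).le
  nlinarith [mul_le_mul_of_nonneg_left hsum ht, mul_nonneg ht hs.le]

end Real

/-- j_p ≤ τ_p ≤ 2 j_p, where j_p is the Gehring–Osgood distance ratio metric. -/
theorem tau_j_comparison {X : Type*} [MetricSpace X] (p x y : X)
    (hx : x ≠ p) (hy : y ≠ p) :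
    (1 / 2) * Real.log ((1 + dist x y / dist x p) * (1 + dist x y / dist y p)) ≤
        Real.log (1 + 2 * dist x y / Real.sqrt (dist x p * dist y p)) ∧
      Real.log (1 + 2 * dist x y / Real.sqrt (dist x p * dist y p)) ≤
        2 * ((1 / 2) * Real.log ((1 + dist x y / dist x p) * (1 + dist x y / dist y p))) := by
  have ha : 0 < dist x p := dist_pos.mpr hx
  have hb : 0 < dist y p := dist_pos.mpr hy
  have ht : 0 ≤ dist x y := dist_nonneg
  constructor
  · have hlog := Real.log_le_log (by positivity)
      (Real.one_add_div_mul_one_add_div_le_sq ha hb (abs_dist_sub_le x y p))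
    rw [Real.log_pow] at hlog
    push_cast at hlog
    linarith
  · have hlog := Real.log_le_log (by positivity) (Real.one_add_two_mul_div_sqrt_mul_le ha hb ht)
    linarith
end

section
/- Let (X,d) be a metric space and p₁,…,p_k ∈ X with D = X \ {p₁,…,p_k}. Then for all x, y ∈ D, τ̂_D(x,y) ≤ 2·j_D(x,y). -/
open Finset
open scoped BigOperators

/- Each term of the average is bounded by the right-hand side: by AM-GM,
`1 + 2r/√(ab) ≤ 1 + r/a + r/b`, and distances to the punctures dominate their minima,
so every summand is at most `log ((1 + r/d(x)) (1 + r/d(y))) = 2 j_D(x,y)`. -/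

lemma lt_ciInf_of_finite {ι α : Type*} [Finite ι] [Nonempty ι]
    [ConditionallyCompleteLinearOrder α] {a : α} {f : ι → α} (hf : ∀ i, a < f i) :
    a < ⨅ i, f i := by
  obtain ⟨i, hi⟩ := exists_eq_ciInf_of_finite (f := f)
  exact hi ▸ hf i

lemma two_div_sqrt_mul_le_inv_add_inv {a b : ℝ} (ha : 0 < a) (hb : 0 < b) :
    2 / √(a * b) ≤ a⁻¹ + b⁻¹ := by
  have hsqrt : 2 / √(a * b) = 2 * √a⁻¹ * √b⁻¹ := by
    rw [Real.sqrt_inv, Real.sqrt_inv, Real.sqrt_mul ha.le]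
    field_simp
  rw [hsqrt]
  calc 2 * √a⁻¹ * √b⁻¹ ≤ √a⁻¹ ^ 2 + √b⁻¹ ^ 2 := two_mul_le_add_sq _ _
    _ = a⁻¹ + b⁻¹ := by
      rw [Real.sq_sqrt (inv_nonneg.2 ha.le), Real.sq_sqrt (inv_nonneg.2 hb.le)]

lemma one_add_two_mul_div_sqrt_mul_le {r a b d e : ℝ} (hr : 0 ≤ r) (hd : 0 < d) (he : 0 < e)
    (hda : d ≤ a) (heb : e ≤ b) :
    1 + 2 * r / √(a * b) ≤ (1 + r / d) * (1 + r / e) := by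
  have ha : 0 < a := hd.trans_le hda
  have hb : 0 < b := he.trans_le heb
  calc 1 + 2 * r / √(a * b) = 1 + r * (2 / √(a * b)) := by ring
    _ ≤ 1 + r * (a⁻¹ + b⁻¹) := by gcongr; exact two_div_sqrt_mul_le_inv_add_inv ha hb
    _ ≤ 1 + r * (d⁻¹ + e⁻¹) := by gcongr
    _ ≤ (1 + r / d) * (1 + r / e) := by
      have : 0 ≤ r / d * (r / e) := by positivity
      linarith [show r * (d⁻¹ + e⁻¹) = r / d + r / e by ring]

/-- τ̂_D ≤ 2 j_D with finitely many punctures. -/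
theorem avg_tau_le_two_j {X : Type*} [MetricSpace X] (k : ℕ) (hk : 0 < k)
    (p : Fin k → X) (x y : X) (hx : ∀ i, x ≠ p i) (hy : ∀ i, y ≠ p i) :
    (1 / (k : ℝ)) * ∑ i : Fin k,
        Real.log (1 + 2 * dist x y / Real.sqrt (dist x (p i) * dist y (p i))) ≤
      2 * ((1 / 2) * Real.log ((1 + dist x y / ⨅ i, dist x (p i)) *
        (1 + dist x y / ⨅ i, dist y (p i)))) := by
  have : Nonempty (Fin k) := ⟨⟨0, hk⟩⟩
  have hdx : 0 < ⨅ i, dist x (p i) := lt_ciInf_of_finite fun i => dist_pos.2 (hx i)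
  have hdy : 0 < ⨅ i, dist y (p i) := lt_ciInf_of_finite fun i => dist_pos.2 (hy i)
  have hterm (i : Fin k) :
      1 + 2 * dist x y / √(dist x (p i) * dist y (p i)) ≤
        (1 + dist x y / ⨅ i, dist x (p i)) * (1 + dist x y / ⨅ i, dist y (p i)) :=
    one_add_two_mul_div_sqrt_mul_le dist_nonneg hdx hdy
      (ciInf_le (Finite.bddBelow_range _) i) (ciInf_le (Finite.bddBelow_range _) i)
  calc (1 / (k : ℝ)) * ∑ i : Fin k,
        Real.log (1 + 2 * dist x y / √(dist x (p i) * dist y (p i)))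
      = 𝔼 i, Real.log (1 + 2 * dist x y / √(dist x (p i) * dist y (p i))) := by
        rw [Fintype.expect_eq_sum_div_card, Fintype.card_fin]; ring
    _ ≤ Real.log ((1 + dist x y / ⨅ i, dist x (p i)) * (1 + dist x y / ⨅ i, dist y (p i))) :=
        expect_le univ_nonempty fun i _ => Real.log_le_log (by positivity) (hterm i)
    _ = _ := by ring
end

section
/- Let (X,d) be a metric space, p ∈ X, and x, y ∈ X \ {p}. Then the one-point triangular ratio s_p(x,y) = d(x,y)/(d(x,p) + d(y,p)) satisfies s_p(x,y) ≤ (e^{τ_p(x,y)} − 1)/4. -/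
theorem two_mul_sqrt_mul_le_add {a b : ℝ} (ha : 0 ≤ a) (hb : 0 ≤ b) :
    2 * √(a * b) ≤ a + b := by
  rw [Real.sqrt_mul ha]
  nlinarith [sq_nonneg (√a - √b), Real.sq_sqrt ha, Real.sq_sqrt hb]

theorem div_add_le_div_two_mul_sqrt_mul {a b d : ℝ} (ha : 0 < a) (hb : 0 < b) (hd : 0 ≤ d) :
    d / (a + b) ≤ d / (2 * √(a * b)) :=
  div_le_div_of_nonneg_left hd (by positivity) (two_mul_sqrt_mul_le_add ha.le hb.le)

/-- The one-point triangular ratio satisfies s_p ≤ (e^{τ_p} − 1)/4. -/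
theorem s_le_exp_tau {X : Type*} [MetricSpace X] (p x y : X)
    (hx : x ≠ p) (hy : y ≠ p) :
    dist x y / (dist x p + dist y p) ≤
      (Real.exp (Real.log (1 + 2 * dist x y / Real.sqrt (dist x p * dist y p))) - 1) / 4 := by
  have ha : 0 < dist x p := dist_pos.mpr hx
  have hb : 0 < dist y p := dist_pos.mpr hy
  rw [Real.exp_log (by positivity)]
  calc dist x y / (dist x p + dist y p)
      ≤ dist x y / (2 * √(dist x p * dist y p)) :=
        div_add_le_div_two_mul_sqrt_mul ha hb dist_nonneg
    _ = (1 + 2 * dist x y / √(dist x p * dist y p) - 1) / 4 := by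
        field_simp
        ring
end

section
/- Let (X,d) be a metric space, p ∈ X, and x ∈ X \ {p}. Then the limit as y → x of τ_p(x,y)/d(x,y) equals 2/d(x,p); that is, the density of the scale-invariant Cassinian metric at x is 2/d(x,p). -/
/-! Write τ_p(x,y) = log (1 + d(x,y) b(y)) with b(y) = 2 / √(d(x,p) d(y,p)) → 2 / d(x,p).
Since log (1 + t) / t → 1 (the derivative of `log` at 1), τ_p(x,y) / d(x,y) behaves like b(y). -/

open Filter Real Topology

theorem Real.tendsto_log_one_add_div_self :
    Tendsto (fun t : ℝ => log (1 + t) / t) (𝓝[≠] 0) (𝓝 1) := by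
  have h := hasDerivAt_iff_tendsto_slope_zero.1 (hasDerivAt_log one_ne_zero)
  simpa [div_eq_inv_mul, add_comm] using h

theorem Real.tendsto_log_one_add_mul_div {α : Type*} {l : Filter α} {a b : α → ℝ} {c : ℝ}
    (ha : Tendsto a l (𝓝 0)) (ha_ne : ∀ᶠ y in l, a y ≠ 0) (hb : Tendsto b l (𝓝 c))
    (hc : c ≠ 0) :
    Tendsto (fun y => log (1 + a y * b y) / a y) l (𝓝 c) := by
  have hb_ne : ∀ᶠ y in l, b y ≠ 0 := hb.eventually_ne hc
  have hab : Tendsto (fun y => a y * b y) l (𝓝[≠] 0) :=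
    tendsto_nhdsWithin_iff.2 ⟨by simpa using ha.mul hb,
      by filter_upwards [ha_ne, hb_ne] with y h₁ h₂ using mul_ne_zero h₁ h₂⟩
  have h := (tendsto_log_one_add_div_self.comp hab).mul hb
  rw [one_mul] at h
  refine h.congr' ?_
  filter_upwards [ha_ne, hb_ne] with y h₁ h₂
  change log (1 + a y * b y) / (a y * b y) * b y = log (1 + a y * b y) / a y
  field_simp

/-- The density of the scale-invariant Cassinian metric at x is 2/d(x,p). -/
theorem tau_density {X : Type*} [MetricSpace X] (p x : X) (hx : x ≠ p) :
    Filter.Tendsto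
      (fun y : X =>
        Real.log (1 + 2 * dist x y / Real.sqrt (dist x p * dist y p)) / dist x y)
      (nhdsWithin x {x}ᶜ) (nhds (2 / dist x p)) := by
  have hxp : 0 < dist x p := dist_pos.2 hx
  have hsqrt : Tendsto (fun y => √(dist x p * dist y p)) (𝓝[≠] x) (𝓝 (dist x p)) := by
    have h := ((continuous_const.mul (continuous_id.dist continuous_const)).sqrt.tendsto x :
      Tendsto (fun y => √(dist x p * dist y p)) (𝓝 x) _)
    simpa [Real.sqrt_mul_self hxp.le] using h.mono_left nhdsWithin_le_nhds
  have hdist : Tendsto (dist x) (𝓝[≠] x) (𝓝 0) := by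
    simpa using ((tendsto_const_nhds.dist tendsto_id : Tendsto (dist x) (𝓝 x) _)).mono_left
      (nhdsWithin_le_nhds (s := {x}ᶜ))
  have hdist_ne : ∀ᶠ y in 𝓝[≠] x, dist x y ≠ 0 :=
    eventually_mem_nhdsWithin.mono fun y hy => dist_ne_zero.2 (Ne.symm hy)
  refine (tendsto_log_one_add_mul_div hdist hdist_ne (tendsto_const_nhds.div hsqrt hxp.ne')
    (by positivity)).congr fun y => ?_
  simp only [Pi.div_apply, mul_div_assoc', mul_comm]
end

section
/- Let (X,d) be a metric space, p ∈ X, x ∈ X \ {p}, and t ∈ [0, log 3). Then the metric-ball inclusions B_d(x, r) ⊆ B_{τ_p}(x, t) ⊆ B_d(x, R) hold, where r = ((e^t − 1)/(e^t + 1))·d(x,p) and R = ((e^t − 1)/(3 − e^t))·d(x,p). -/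
/-!
Write `a = d(x,p)`, `b = d(y,p)`, `u = d(x,y)` and `s = eᵗ`; then `τ_p(x,y) < t` says exactly
`2u < (s - 1) √(ab)`. The triangle inequality bounds `b` between `a - u` and `a + u`. For the inner
ball, `u < (s-1)/(s+1) · a` forces `b > 2a/(s+1)`, hence `√(ab) ≥ 2a/(s+1)` since `s + 1 ≥ 2`.
For the outer ball, `√(ab) ≤ a + u` turns `2u < (s - 1) √(ab)` into `(3 - s) u < (s - 1) a`.
-/

open Metric Real

section RealInequalities

variable {a b u s : ℝ}

lemma pos_and_two_mul_lt_mul_sqrt (hs : 0 < s) (ha : 0 ≤ a) (hu : 0 ≤ u) (hab : a ≤ u + b)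
    (h : u < (s - 1) / (s + 1) * a) : 0 < b ∧ 2 * u < (s - 1) * √(a * b) := by
  have hs1 : 0 < s + 1 := by linarith
  rw [div_mul_eq_mul_div, lt_div_iff₀ hs1] at h
  have hb : 2 * a < (s + 1) * b := by nlinarith [mul_le_mul_of_nonneg_left hab hs1.le]
  have hsa : 0 < (s - 1) * a := by nlinarith
  have ha0 : 0 < a := lt_of_le_of_ne ha (by rintro rfl; simp at hsa)
  have hs_gt : 1 < s := by nlinarith
  have hb0 : 0 < b := by nlinarith
  have hsqrt : 2 * a ≤ (s + 1) * √(a * b) := by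
    rw [← div_le_iff₀' hs1, le_sqrt (by positivity) (by positivity), div_pow]
    rw [div_le_iff₀ (by positivity)]
    nlinarith [mul_lt_mul_of_pos_left hb (by linarith : 0 < 2 * a)]
  refine ⟨hb0, lt_of_mul_lt_mul_right (a := s + 1) ?_ hs1.le⟩
  nlinarith [mul_le_mul_of_nonneg_left hsqrt (by linarith : 0 ≤ s - 1)]

lemma lt_div_mul_of_two_mul_lt_mul_sqrt (hs : s < 3) (ha : 0 ≤ a) (hu : 0 ≤ u)
    (hba : b ≤ u + a) (h : 2 * u < (s - 1) * √(a * b)) : u < (s - 1) / (3 - s) * a := by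
  have hsqrt : √(a * b) ≤ u + a :=
    (sqrt_le_left (by positivity)).2 (by nlinarith [mul_le_mul_of_nonneg_left hba ha])
  have hs_gt : 1 < s := by nlinarith [sqrt_nonneg (a * b)]
  rw [div_mul_eq_mul_div, lt_div_iff₀ (by linarith)]
  nlinarith [mul_le_mul_of_nonneg_left hsqrt (by linarith : 0 ≤ s - 1)]

end RealInequalities

section TauBall

variable {X : Type*} [MetricSpace X]

/-- `τ_p(x, y)`; when `x = p` or `y = p` the division by `√0` makes it the junk value `0`. -/
noncomputable def tauDist (p x y : X) : ℝ :=
  log (1 + 2 * dist x y / √(dist x p * dist y p))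

def tauBall (p x : X) (t : ℝ) : Set X :=
  {y | y ≠ p ∧ tauDist p x y < t}

lemma tauDist_lt_iff {p x y : X} (hx : x ≠ p) (hy : y ≠ p) {t : ℝ} :
    tauDist p x y < t ↔ 2 * dist x y < (exp t - 1) * √(dist x p * dist y p) := by
  have hsqrt : 0 < √(dist x p * dist y p) :=
    sqrt_pos.2 (mul_pos (dist_pos.2 hx) (dist_pos.2 hy))
  rw [tauDist, log_lt_iff_lt_exp (by positivity), ← lt_sub_iff_add_lt', div_lt_iff₀ hsqrt]

lemma ball_subset_tauBall (p x : X) (t : ℝ) :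
    ball x ((exp t - 1) / (exp t + 1) * dist x p) ⊆ tauBall p x t := by
  intro y hy
  rw [mem_ball, dist_comm] at hy
  obtain ⟨hb, hlt⟩ := pos_and_two_mul_lt_mul_sqrt (exp_pos t) dist_nonneg dist_nonneg
    (dist_triangle x y p) hy
  have hy : y ≠ p := dist_pos.1 hb
  have hx : x ≠ p := by
    rintro rfl
    simp only [dist_self, zero_mul, sqrt_zero, mul_zero] at hlt
    linarith [dist_nonneg (x := x) (y := y)]
  exact ⟨hy, (tauDist_lt_iff hx hy).2 hlt⟩

lemma tauBall_subset_ball {p x : X} (hx : x ≠ p) {t : ℝ} (ht : t < Real.log 3) :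
    tauBall p x t ⊆ ball x ((exp t - 1) / (3 - exp t) * dist x p) := by
  rintro y ⟨hy, hlt⟩
  have hs : exp t < 3 := exp_log (by norm_num : (0 : ℝ) < 3) ▸ exp_lt_exp.2 ht
  rw [mem_ball, dist_comm]
  exact lt_div_mul_of_two_mul_lt_mul_sqrt hs dist_nonneg dist_nonneg
    (dist_triangle_left y p x) ((tauDist_lt_iff hx hy).1 hlt)

end TauBall

theorem tau_ball_inclusions_general {X : Type*} [MetricSpace X] (p x : X) (hx : x ≠ p)
    (t : ℝ) (ht : t < Real.log 3) :
    Metric.ball x ((Real.exp t - 1) / (Real.exp t + 1) * dist x p) ⊆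
        {y : X | y ≠ p ∧
          Real.log (1 + 2 * dist x y / Real.sqrt (dist x p * dist y p)) < t} ∧
      {y : X | y ≠ p ∧
          Real.log (1 + 2 * dist x y / Real.sqrt (dist x p * dist y p)) < t} ⊆
        Metric.ball x ((Real.exp t - 1) / (3 - Real.exp t) * dist x p) :=
  ⟨ball_subset_tauBall p x t, tauBall_subset_ball hx ht⟩

/-- Ball inclusions: B_d(x,r) ⊆ B_{τ_p}(x,t) ⊆ B_d(x,R) for t ∈ [0, log 3). -/
theorem tau_ball_inclusions {X : Type*} [MetricSpace X] (p x : X) (hx : x ≠ p)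
    (t : ℝ) (ht0 : 0 ≤ t) (ht : t < Real.log 3) :
    Metric.ball x ((Real.exp t - 1) / (Real.exp t + 1) * dist x p) ⊆
        {y : X | y ≠ p ∧
          Real.log (1 + 2 * dist x y / Real.sqrt (dist x p * dist y p)) < t} ∧
      {y : X | y ≠ p ∧
          Real.log (1 + 2 * dist x y / Real.sqrt (dist x p * dist y p)) < t} ⊆
        Metric.ball x ((Real.exp t - 1) / (3 - Real.exp t) * dist x p) :=
  tau_ball_inclusions_general p x hx t ht
end

section
/- Let f : (X,d₁) → (Y,d₂) be an L-bilipschitz mapping (L ≥ 1). Then for all p ∈ X and x, y ∈ X \ {p}, L^{−2}·τ_p(x,y) ≤ τ_{f(p)}(f(x), f(y)) ≤ L²·τ_p(x,y). -/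
/-!
Both bounds come from one estimate used in the two directions: the distortion of the three
distances `d(x,y)`, `d(x,p)`, `d(y,p)` by a factor at most `L` distorts the argument
`r = 2 d(x,y) / √(d(x,p) d(y,p))` of the logarithm by at most `L²`. Bernoulli's inequality
`1 + c r ≤ (1 + r) ^ c` for `c ≥ 1` then shows that `log (1 + ·)` distorts a factor `c` by at
most `c`.
-/

open Real

lemma Real.log_one_add_le_mul_log_one_add {c r s : ℝ} (hc : 1 ≤ c) (hr : 0 ≤ r) (hs : 0 ≤ s)
    (h : s ≤ c * r) : log (1 + s) ≤ c * log (1 + r) :=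
  calc log (1 + s) ≤ log (1 + c * r) := log_le_log (by linarith) (by linarith)
    _ ≤ log ((1 + r) ^ c) :=
      log_le_log (by positivity) (one_add_mul_self_le_rpow_one_add (by linarith) hc)
    _ = c * log (1 + r) := log_rpow (by linarith) c

lemma div_sqrt_mul_le_sq_mul {L a b d a' b' d' : ℝ} (hL : 0 < L) (ha : 0 < a) (hb : 0 < b)
    (hd : 0 ≤ d) (hdd' : d' ≤ L * d) (haa' : a ≤ L * a') (hbb' : b ≤ L * b') :
    d' / √(a' * b') ≤ L ^ 2 * (d / √(a * b)) := by
  have ha' : 0 < a' := pos_of_mul_pos_right (ha.trans_le haa') hL.le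
  have hb' : 0 < b' := pos_of_mul_pos_right (hb.trans_le hbb') hL.le
  have hsqrt : √(a * b) ≤ L * √(a' * b') := by
    rw [← sqrt_sq hL.le, ← sqrt_mul (sq_nonneg L)]
    exact sqrt_le_sqrt (by nlinarith [mul_le_mul haa' hbb' hb.le (by positivity)])
  calc d' / √(a' * b') ≤ L * d / √(a' * b') := by gcongr
    _ = L ^ 2 * d / (L * √(a' * b')) := by field_simp
    _ ≤ L ^ 2 * (d / √(a * b)) := by
      rw [← mul_div_assoc]
      gcongr

/-- An L-bilipschitz map is L²-bilipschitz for the scale-invariant Cassinian metric. -/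
theorem tau_bilipschitz {X Y : Type*} [MetricSpace X] [MetricSpace Y]
    (f : X → Y) (L : ℝ) (hL : 1 ≤ L)
    (hbl : ∀ x y : X, dist x y / L ≤ dist (f x) (f y) ∧ dist (f x) (f y) ≤ L * dist x y)
    (p x y : X) (hx : x ≠ p) (hy : y ≠ p) :
    L ^ (-2 : ℤ) * Real.log (1 + 2 * dist x y / Real.sqrt (dist x p * dist y p)) ≤
        Real.log (1 + 2 * dist (f x) (f y) /
          Real.sqrt (dist (f x) (f p) * dist (f y) (f p))) ∧
      Real.log (1 + 2 * dist (f x) (f y) /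
          Real.sqrt (dist (f x) (f p) * dist (f y) (f p))) ≤
        L ^ 2 * Real.log (1 + 2 * dist x y / Real.sqrt (dist x p * dist y p)) := by
  have hL0 : 0 < L := by linarith
  have hxp : 0 < dist x p := dist_pos.2 hx
  have hyp : 0 < dist y p := dist_pos.2 hy
  have hfxp : 0 < dist (f x) (f p) := (div_pos hxp hL0).trans_le (hbl x p).1
  have hfyp : 0 < dist (f y) (f p) := (div_pos hyp hL0).trans_le (hbl y p).1
  have expand (u v : X) : dist u v ≤ L * dist (f u) (f v) := (div_le_iff₀' hL0).1 (hbl u v).1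
  have hL2 : 1 ≤ L ^ 2 := one_le_pow₀ hL
  refine ⟨?_, log_one_add_le_mul_log_one_add hL2 (by positivity) (by positivity) ?_⟩
  · rw [zpow_neg, zpow_ofNat, inv_mul_le_iff₀ (by positivity)]
    refine log_one_add_le_mul_log_one_add hL2 (by positivity) (by positivity) ?_
    exact div_sqrt_mul_le_sq_mul hL0 hfxp hfyp (by positivity) (by linarith [expand x y])
      (hbl x p).2 (hbl y p).2
  · exact div_sqrt_mul_le_sq_mul hL0 hxp hyp (by positivity) (by linarith [(hbl x y).2])
      (expand x p) (expand y p)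
end

section
/- Let (X,d) be a metric space, p ∈ X, and x, y ∈ X \ {p} with d(x,p) ≤ d(y,p). Then d(x,p) + d(y,p) ≤ 3 d(x,y) + 4 √(d(x,p) d(y,p)). -/
theorem le_sqrt_mul_of_le {a b : ℝ} (ha : 0 ≤ a) (hab : a ≤ b) : a ≤ √(a * b) :=
  Real.le_sqrt_of_sq_le (by nlinarith)

theorem key_ineq_general {X : Type*} [MetricSpace X] (p x y : X)
    (h : dist x p ≤ dist y p) :
    dist x p + dist y p ≤ 3 * dist x y + 4 * Real.sqrt (dist x p * dist y p) := by
  have hyp : dist y p ≤ dist x y + dist x p := dist_triangle_left y p x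
  have hxp : dist x p ≤ √(dist x p * dist y p) := le_sqrt_mul_of_le dist_nonneg h
  calc dist x p + dist y p ≤ dist x y + 2 * √(dist x p * dist y p) := by linarith
    _ ≤ 3 * dist x y + 4 * √(dist x p * dist y p) := by
      linarith [dist_nonneg (x := x) (y := y), Real.sqrt_nonneg (dist x p * dist y p)]

/-- Key intermediate inequality: d(x,p)+d(y,p) ≤ 3 d(x,y) + 4 √(d(x,p)d(y,p)). -/
theorem key_ineq {X : Type*} [MetricSpace X] (p x y : X)
    (hx : x ≠ p) (hy : y ≠ p) (h : dist x p ≤ dist y p) :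
    dist x p + dist y p ≤ 3 * dist x y + 4 * Real.sqrt (dist x p * dist y p) :=
  key_ineq_general p x y h
end
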